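/- Suppose a_1, a_2, …, a_N are distinct symbols in an alphabet Σ, N ≥ 20, M ≥ 2 and l ≥ 1 are integers, and for j = 1, …, M define B_j = (a_1^{l·N^{2j}} a_2^{l·N^{2j}} ⋯ a_N^{l·N^{2j}})^{N^{2M−2j+2}} (the Feldman pattern in which each symbol occurrence is replaced by l repetitions). If B and B̄ are strings of consecutive symbols in B_j and B_k respectively, where j ≠ k, |B| ≥ l·N^{2M+2} and |B̄| ≥ l·N^{2M+2}, then f̄(B, B̄) > 1 − 4/√N and f̃(B, B̄) > 1 − 12/√N. -/

import Mathlib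

open MeasureTheory

namespace Paper

variable {σ : Type*}

/-- The concatenation of `t` copies of the string `w`. -/
def rep (w : List σ) (t : ℕ) : List σ := (List.replicate t w).flatten

/-- `I` is a match between the strings `a` and `b` (with 0-based indices):
a collection of pairs of indices, strictly increasing in both coordinates,
pairing equal symbols. -/
def IsMatch (a b : List σ) (I : List (ℕ × ℕ)) : Prop :=
  I.Chain' (fun p q => p.1 < q.1 ∧ p.2 < q.2) ∧
  ∀ p ∈ I, p.1 < a.length ∧ p.2 < b.length ∧ a[p.1]? = b[p.2]?

/-- The largest cardinality of a match between `a` and `b`. -/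
noncomputable def maxMatch (a b : List σ) : ℕ :=
  sSup {r | ∃ I, IsMatch a b I ∧ I.length = r}

/-- The `f̄` distance between two strings. -/
noncomputable def fbar (a b : List σ) : ℝ :=
  1 - 2 * (maxMatch a b : ℝ) / (a.length + b.length)

/-- `I` is an approximate match between the strings `a` and `b` (0-based indices):
pairs of indices, nondecreasing in each coordinate and strictly increasing as pairs,
pairing equal symbols, such that the set of indices paired with any given index is
contained in a set of three consecutive indices. -/
def IsApproxMatch (a b : List σ) (I : List (ℕ × ℕ)) : Prop :=
  I.Chain' (fun p q => p.1 ≤ q.1 ∧ p.2 ≤ q.2 ∧ p ≠ q) ∧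
  (∀ p ∈ I, p.1 < a.length ∧ p.2 < b.length ∧ a[p.1]? = b[p.2]?) ∧
  (∀ p ∈ I, (∃ s, ∀ q ∈ I, q.1 = p.1 → q.2 ∈ ({s, s+1, s+2} : Set ℕ)) ∧
            (∃ t, ∀ q ∈ I, q.2 = p.2 → q.1 ∈ ({t, t+1, t+2} : Set ℕ)))

/-- The largest cardinality of an approximate match between `a` and `b`. -/
noncomputable def maxApproxMatch (a b : List σ) : ℕ :=
  sSup {r | ∃ I, IsApproxMatch a b I ∧ I.length = r}

/-- The approximate distance `f̃` between two strings. -/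
noncomputable def ftilde (a b : List σ) : ℝ :=
  max 0 (1 - 2 * (maxApproxMatch a b : ℝ) / (a.length + b.length))

end Paper

open Paper List

/-- The `j`-th Feldman pattern on the symbols `a 0, …, a (N−1)` in which each symbol
occurrence is replaced by `l` repetitions:
`B_j = (a₁^{l·N^{2j}} a₂^{l·N^{2j}} ⋯ a_N^{l·N^{2j}})^{N^{2M−2j+2}}`. -/
def feldmanPatternRep {σ : Type*} (N : ℕ) (a : Fin N → σ) (l j M : ℕ) : List σ :=
  Paper.rep ((List.ofFn fun i : Fin N => List.replicate (l * N ^ (2 * j)) (a i)).flatten)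
    (N ^ (2 * (M - j) + 2))

/-!
Let `j < k`, `p = l·N^{2j}` and `q = l·N^{2k} ≥ N·p`. The string `B_j` is made of runs of length
`p` that cycle through the `N` symbols with period `N·p`, and a run of `B_k` has a single symbol.
Index each matched pair by (period of `B_j` + run of `B̄`, position inside the `p`-run). Both
summands are monotone along a match, and within one period of `B_j` and one run of `B̄` the
symbol, hence the `p`-run, is fixed; so distinct pairs get distinct indices, and a match has at
most `(|B|/(N·p) + |B̄|/q + 3)·p ≤ (2|B| + |B̄|)/N` pairs. An approximate match contains a genuine
match of a third of its size. Both bounds are far below `2(|B|+|B̄|)/√N` and `6(|B|+|B̄|)/√N`.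
-/

namespace List

variable {α : Type*}

theorem getElem?_flatten_of_forall_length_eq {p : ℕ} (hp : 0 < p) :
    ∀ {L : List (List α)}, (∀ x ∈ L, x.length = p) →
      ∀ i, L.flatten[i]? = L[i / p]?.bind (·[i % p]?)
  | [], _, i => by simp
  | x :: L, hL, i => by
    have hx : x.length = p := hL x mem_cons_self
    rw [flatten_cons, getElem?_append, hx]
    split_ifs with hi
    · simp [Nat.div_eq_of_lt hi, Nat.mod_eq_of_lt hi]
    · obtain ⟨i, rfl⟩ := Nat.exists_eq_add_of_le (not_lt.1 hi)
      rw [getElem?_flatten_of_forall_length_eq hp (fun y hy => hL y (mem_cons_of_mem _ hy)),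
        Nat.add_sub_cancel_left, Nat.add_div_left _ hp, Nat.add_mod_left]
      simp

theorem getElem?_flatten_ofFn_replicate {N p : ℕ} (hp : 0 < p) (a : Fin N → α) (i : ℕ) :
    (ofFn fun n => replicate p (a n)).flatten[i]? = (ofFn a)[i / p]? := by
  rw [getElem?_flatten_of_forall_length_eq hp (by simp)]
  by_cases h : i / p < N <;> simp [h, Nat.mod_lt _ hp]

end List

theorem fst_lt_of_lt_of_lt_of_lt {z₀ z₁ z₂ z₃ : ℕ × ℕ} (h₀ : z₀ < z₁) (h₁ : z₁ < z₂)
    (h₂ : z₂ < z₃) {s : ℕ}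
    (hs : ∀ z ∈ [z₀, z₁, z₂, z₃], z.1 = z₀.1 → z.2 ∈ ({s, s + 1, s + 2} : Set ℕ)) :
    z₀.1 < z₃.1 := by
  simp only [List.mem_cons, List.not_mem_nil, or_false, forall_eq_or_imp, forall_eq,
    Set.mem_insert_iff, Set.mem_singleton_iff] at hs
  obtain ⟨hs₀, hs₁, hs₂, hs₃⟩ := hs
  -- equal first coordinates would put four increasing second coordinates in a window of three
  have snd_lt : ∀ {z w : ℕ × ℕ}, z < w → z.1 = w.1 → z.2 < w.2 := fun h he => by
    rw [Prod.lt_iff] at h; omega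
  have l₀ := Prod.le_def.1 h₀.le
  have l₁ := Prod.le_def.1 h₁.le
  have l₂ := Prod.le_def.1 h₂.le
  by_contra! hle
  have r₀ := hs₀ trivial
  have r₁ := hs₁ (by omega)
  have r₂ := hs₂ (by omega)
  have r₃ := hs₃ (by omega)
  have := snd_lt h₀ (by omega)
  have := snd_lt h₁ (by omega)
  have := snd_lt h₂ (by omega)
  omega

theorem snd_lt_of_lt_of_lt_of_lt {z₀ z₁ z₂ z₃ : ℕ × ℕ} (h₀ : z₀ < z₁) (h₁ : z₁ < z₂)
    (h₂ : z₂ < z₃) {t : ℕ}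
    (ht : ∀ z ∈ [z₀, z₁, z₂, z₃], z.2 = z₀.2 → z.1 ∈ ({t, t + 1, t + 2} : Set ℕ)) :
    z₀.2 < z₃.2 :=
  fst_lt_of_lt_of_lt_of_lt (Prod.swap_lt_swap.2 h₀) (Prod.swap_lt_swap.2 h₁)
    (Prod.swap_lt_swap.2 h₂) (s := t) (by simpa using ht)

theorem eq_of_div_mod_eq {N p q x x' y y' : ℕ} (hx : x ≤ x') (hy : y ≤ y')
    (hs : x / p % N = y / q % N) (hs' : x' / p % N = y' / q % N)
    (hsum : x / (N * p) + y / q = x' / (N * p) + y' / q) (hmod : x % p = x' % p) : x = x' := by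
  have hu : x / (N * p) ≤ x' / (N * p) := Nat.div_le_div_right hx
  have ht : y / q ≤ y' / q := Nat.div_le_div_right hy
  have hdiv : x / p = x' / p := by
    have e := Nat.div_add_mod (x / p) N
    have e' := Nat.div_add_mod (x' / p) N
    rw [Nat.div_div_eq_div_mul, mul_comm p] at e e'
    rw [hs] at e
    rw [hs'] at e'
    have : y / q = y' / q := by omega
    have : x / (N * p) = x' / (N * p) := by omega
    rw [← e, ← e']; congr 2
  have e := Nat.div_add_mod x p
  have e' := Nat.div_add_mod x' p
  rw [hdiv, hmod] at e
  omega

namespace Paper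

variable {σ : Type*} {a b : List σ} {I : List (ℕ × ℕ)}

theorem rep_getElem? (w : List σ) {T i : ℕ} (hi : i < T * w.length) :
    (rep w T)[i]? = w[i % w.length]? := by
  have hw : 0 < w.length := Nat.pos_of_mul_pos_left (Nat.zero_lt_of_lt hi)
  rw [rep, getElem?_flatten_of_forall_length_eq hw (fun x hx => by rw [eq_of_mem_replicate hx]),
    getElem?_replicate, if_pos ((Nat.div_lt_iff_lt_mul hw).2 hi), Option.bind_some]

theorem isMatch_iff : IsMatch a b I ↔ I.Pairwise (fun z w : ℕ × ℕ => z.1 < w.1 ∧ z.2 < w.2) ∧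
    ∀ z ∈ I, z.1 < a.length ∧ z.2 < b.length ∧ a[z.1]? = b[z.2]? := by
  have : Trans (fun z w : ℕ × ℕ => z.1 < w.1 ∧ z.2 < w.2)
      (fun z w : ℕ × ℕ => z.1 < w.1 ∧ z.2 < w.2) (fun z w : ℕ × ℕ => z.1 < w.1 ∧ z.2 < w.2) :=
    ⟨fun h h' => ⟨h.1.trans h'.1, h.2.trans h'.2⟩⟩
  rw [← List.isChain_iff_pairwise]
  exact Iff.rfl

theorem IsMatch.swap (h : IsMatch a b I) : IsMatch b a (I.map Prod.swap) := by
  rw [isMatch_iff] at h ⊢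
  refine ⟨List.pairwise_map.2 (h.1.imp fun h => ⟨h.2, h.1⟩), ?_⟩
  simp only [List.mem_map, forall_exists_index, and_imp, forall_apply_eq_imp_iff₂]
  exact fun z hz => ⟨(h.2 z hz).2.1, (h.2 z hz).1, (h.2 z hz).2.2.symm⟩

theorem IsMatch.length_le_left (h : IsMatch a b I) : I.length ≤ a.length := by
  rw [isMatch_iff] at h
  have hnd : (I.map Prod.fst).Nodup := List.pairwise_map.2 (h.1.imp fun h => h.1.ne)
  calc I.length = (I.map Prod.fst).toFinset.card := by
        rw [List.toFinset_card_of_nodup hnd, List.length_map]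
    _ ≤ (Finset.range a.length).card :=
        Finset.card_le_card fun x hx => by
          obtain ⟨z, hz, rfl⟩ := List.mem_map.1 (List.mem_toFinset.1 hx)
          exact Finset.mem_range.2 (h.2 z hz).1
    _ = a.length := Finset.card_range _

theorem exists_isMatch_length_eq_maxMatch (a b : List σ) :
    ∃ I, IsMatch a b I ∧ I.length = maxMatch a b :=
  Nat.sSup_mem (s := {r | ∃ I, IsMatch a b I ∧ I.length = r})
    ⟨0, [], isMatch_iff.2 ⟨List.Pairwise.nil, by simp⟩, rfl⟩
    ⟨a.length, by rintro _ ⟨I, hI, rfl⟩; exact hI.length_le_left⟩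

theorem IsApproxMatch.pairwise (h : IsApproxMatch a b I) : I.Pairwise (· < ·) := by
  refine List.isChain_iff_pairwise.1 (h.1.imp fun z w hzw => ?_)
  rw [lt_iff_le_and_ne, Prod.le_def]
  exact ⟨⟨hzw.1, hzw.2.1⟩, hzw.2.2⟩

theorem IsApproxMatch.exists_isMatch (h : IsApproxMatch a b I) :
    ∃ J, IsMatch a b J ∧ I.length ≤ 3 * J.length := by
  have hpw := List.pairwise_iff_getElem.1 h.pairwise
  have hlt (m : Fin ((I.length + 2) / 3)) : 3 * m.1 < I.length := by omega
  -- keep every third pair: the window condition forces three steps to advance both coordinates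
  refine ⟨List.ofFn fun m => I[3 * m.1]'(hlt m), isMatch_iff.2 ⟨?_, ?_⟩,
    by rw [List.length_ofFn]; omega⟩
  · refine List.pairwise_ofFn.2 fun m m' hmm => ?_
    have hmm : 3 * m.1 + 3 ≤ 3 * m'.1 := by have := Fin.lt_def.1 hmm; omega
    have h₀ := hpw (3 * m) (3 * m + 1) (hlt m) (by omega) (by omega)
    have h₁ := hpw (3 * m + 1) (3 * m + 2) (by omega) (by omega) (by omega)
    have h₂ := hpw (3 * m + 2) (3 * m') (by omega) (hlt m') (by omega)
    have hmem : ∀ z ∈ [I[3 * m.1], I[3 * m.1 + 1], I[3 * m.1 + 2], I[3 * m'.1]], z ∈ I := by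
      simp
    obtain ⟨⟨s, hs⟩, ⟨t, ht⟩⟩ := h.2.2 _ (List.getElem_mem (hlt m))
    exact ⟨fst_lt_of_lt_of_lt_of_lt h₀ h₁ h₂ fun z hz => hs z (hmem z hz),
      snd_lt_of_lt_of_lt_of_lt h₀ h₁ h₂ fun z hz => ht z (hmem z hz)⟩
  · simp only [List.mem_ofFn, forall_exists_index, forall_apply_eq_imp_iff]
    exact fun m => h.2.1 _ (List.getElem_mem _)

theorem maxApproxMatch_le_three_mul_maxMatch (a b : List σ) :
    maxApproxMatch a b ≤ 3 * maxMatch a b := by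
  refine csSup_le' ?_
  rintro _ ⟨I, hI, rfl⟩
  obtain ⟨J, hJ, hIJ⟩ := hI.exists_isMatch
  have hbdd : BddAbove {r | ∃ I, IsMatch a b I ∧ I.length = r} :=
    ⟨a.length, by rintro _ ⟨I, hI, rfl⟩; exact hI.length_le_left⟩
  exact hIJ.trans (Nat.mul_le_mul_left 3 (le_csSup hbdd ⟨J, hJ, rfl⟩))

theorem length_le_of_pairwise_of_div_mod_eq {N p q o o' X Y : ℕ} (hp : 0 < p)
    {I : List (ℕ × ℕ)} (hI : I.Pairwise fun z w : ℕ × ℕ => z.1 < w.1 ∧ z.2 < w.2)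
    (hX : ∀ z ∈ I, z.1 < X) (hY : ∀ z ∈ I, z.2 < Y)
    (hsym : ∀ z ∈ I, (z.1 + o) / p % N = (z.2 + o') / q % N) :
    I.length ≤ (X / (N * p) + Y / q + 3) * p := by
  set F : ℕ × ℕ → ℕ × ℕ := fun z => ((z.1 + o) / (N * p) + (z.2 + o') / q, (z.1 + o) % p)
  have hnd : (I.map F).Nodup := List.pairwise_map.2 <| hI.imp_of_mem fun hz hw hzw hF =>
    hzw.1.ne <| Nat.add_right_cancel <| eq_of_div_mod_eq (by omega) (by omega) (hsym _ hz)
      (hsym _ hw) (Prod.ext_iff.1 hF).1 (Prod.ext_iff.1 hF).2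
  have hsub : (I.map F).toFinset ⊆ Finset.Icc (o / (N * p) + o' / q)
      ((X + o) / (N * p) + (Y + o') / q) ×ˢ Finset.range p := by
    intro w hw
    obtain ⟨z, hz, rfl⟩ := List.mem_map.1 (List.mem_toFinset.1 hw)
    have := hX z hz
    have := hY z hz
    simp only [F, Finset.mem_product, Finset.mem_Icc, Finset.mem_range]
    refine ⟨⟨add_le_add (Nat.div_le_div_right ?_) (Nat.div_le_div_right ?_),
      add_le_add (Nat.div_le_div_right ?_) (Nat.div_le_div_right ?_)⟩, Nat.mod_lt _ hp⟩ <;> omega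
  have hX' := Nat.add_div_le_div_add_div_add_one X o (N * p)
  have hY' := Nat.add_div_le_div_add_div_add_one Y o' q
  calc I.length = (I.map F).toFinset.card := by
        rw [List.toFinset_card_of_nodup hnd, List.length_map]
    _ ≤ _ := Finset.card_le_card hsub
    _ = ((X + o) / (N * p) + (Y + o') / q + 1 - (o / (N * p) + o' / q)) * p := by
        rw [Finset.card_product, Nat.card_Icc, Finset.card_range]
    _ ≤ (X / (N * p) + Y / q + 3) * p :=
        Nat.mul_le_mul_right _ (Nat.sub_le_iff_le_add.2 (by omega))

end Paper

section Feldman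

variable {σ : Type*} (N : ℕ) (a : Fin N → σ) (l j M : ℕ)

theorem feldmanPatternRep_length :
    (feldmanPatternRep N a l j M).length = N ^ (2 * (M - j) + 2) * (l * N ^ (2 * j) * N) := by
  simp [feldmanPatternRep, rep, length_flatten, Function.comp_def, mul_comm]

theorem feldmanPatternRep_getElem? {i : ℕ} (hi : i < (feldmanPatternRep N a l j M).length) :
    (feldmanPatternRep N a l j M)[i]? = (ofFn a)[i / (l * N ^ (2 * j)) % N]? := by
  rw [feldmanPatternRep_length] at hi
  have hp : 0 < l * N ^ (2 * j) :=
    Nat.pos_of_mul_pos_right (Nat.pos_of_mul_pos_left (Nat.zero_lt_of_lt hi))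
  have hblock : (ofFn fun n => replicate (l * N ^ (2 * j)) (a n)).flatten.length =
      l * N ^ (2 * j) * N := by
    simp [length_flatten, Function.comp_def, mul_comm]
  rw [feldmanPatternRep, rep_getElem? _ (hblock ▸ hi), getElem?_flatten_ofFn_replicate hp, hblock,
    Nat.mod_mul_right_div_self]

end Feldman

theorem Paper.IsMatch.mul_length_le_of_infix_feldmanPatternRep {σ : Type*} {N M l j k : ℕ}
    {a : Fin N → σ} (ha : Function.Injective a) (hN : 3 ≤ N) (hl : 0 < l) (hjk : j < k)
    (hjM : j ≤ M) {B Bb : List σ} {I : List (ℕ × ℕ)} (hI : IsMatch B Bb I)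
    (hB : B <:+: feldmanPatternRep N a l j M) (hBb : Bb <:+: feldmanPatternRep N a l k M)
    (hBlen : l * N ^ (2 * M + 2) ≤ B.length) :
    N * I.length ≤ 2 * B.length + Bb.length := by
  set p := l * N ^ (2 * j)
  set q := l * N ^ (2 * k)
  obtain ⟨o, ho, hBo⟩ := infix_iff_getElem?.1 hB
  obtain ⟨o', ho', hBbo'⟩ := infix_iff_getElem?.1 hBb
  rw [isMatch_iff] at hI
  have hsym : ∀ z ∈ I, (z.1 + o) / p % N = (z.2 + o') / q % N := by
    intro z hz
    obtain ⟨hz₁, hz₂, hzB⟩ := hI.2 z hz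
    have h := hBo z.1 hz₁
    rw [← getElem?_eq_getElem hz₁, hzB, getElem?_eq_getElem hz₂, ← hBbo' z.2 hz₂,
      feldmanPatternRep_getElem? _ _ _ _ _ (by omega),
      feldmanPatternRep_getElem? _ _ _ _ _ (by omega)] at h
    exact ((getElem?_inj (by simp [Nat.mod_lt, show 0 < N by omega])
      (nodup_ofFn.2 ha)).1 h)
  have hcount := length_le_of_pairwise_of_div_mod_eq (by positivity) hI.1
    (fun z hz => (hI.2 z hz).1) (fun z hz => (hI.2 z hz).2.1) hsym
  have hq : N * p ≤ q := calc
    N * p = l * N ^ (2 * j + 1) := by ring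
    _ ≤ q := Nat.mul_le_mul_left l (Nat.pow_le_pow_right (by omega) (by omega))
  have hX : 3 * (N * p) ≤ B.length := calc
    3 * (N * p) ≤ N * (N * p) := Nat.mul_le_mul_right _ hN
    _ = l * N ^ (2 * j + 2) := by ring
    _ ≤ l * N ^ (2 * M + 2) := Nat.mul_le_mul_left l (Nat.pow_le_pow_right (by omega) (by omega))
    _ ≤ B.length := hBlen
  calc N * I.length
      ≤ N * ((B.length / (N * p) + Bb.length / q + 3) * p) := Nat.mul_le_mul_left N hcount
    _ = B.length / (N * p) * (N * p) + Bb.length / q * (N * p) + 3 * (N * p) := by ring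
    _ ≤ B.length + Bb.length + B.length :=
        add_le_add (add_le_add (Nat.div_mul_le_self _ _)
          ((Nat.mul_le_mul_left _ hq).trans (Nat.div_mul_le_self _ _))) hX
    _ = 2 * B.length + Bb.length := by ring


theorem two_mul_div_lt_of_mul_lt {N m c L : ℕ} (hN : 1 ≤ N) (h : N * m < c * L) :
    2 * (m : ℝ) / L < 2 * c / √N := by
  have hL : (0 : ℝ) < L := by exact_mod_cast Nat.pos_of_mul_pos_left (Nat.zero_lt_of_lt h)
  have hsqrt : √N ≤ N := Real.sqrt_le_self_iff.2 (Or.inr (by exact_mod_cast hN))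
  have hcast : (N : ℝ) * m < c * L := by exact_mod_cast h
  rw [div_lt_div_iff₀ hL (Real.sqrt_pos.2 (by positivity))]
  nlinarith [mul_le_mul_of_nonneg_left hsqrt m.cast_nonneg]

theorem statement14_general {σ : Type*} (N M l : ℕ) (hN : 20 ≤ N) (hl : 1 ≤ l)
    (a : Fin N → σ) (ha : Function.Injective a)
    (j k : ℕ) (hjM : j ≤ M) (hkM : k ≤ M) (hjk : j ≠ k)
    (B Bb : List σ) (hB : B <:+: feldmanPatternRep N a l j M)
    (hBb : Bb <:+: feldmanPatternRep N a l k M)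
    (hBlen : l * N ^ (2 * M + 2) ≤ B.length) (hBblen : l * N ^ (2 * M + 2) ≤ Bb.length) :
    1 - 4 / Real.sqrt N < fbar B Bb ∧ 1 - 12 / Real.sqrt N < ftilde B Bb := by
  have hpos : 0 < l * N ^ (2 * M + 2) := by positivity
  have hmatch : ∀ I, IsMatch B Bb I → N * I.length < 2 * (B.length + Bb.length) := by
    intro I hI
    rcases Nat.lt_or_gt_of_ne hjk with h | h
    · have := hI.mul_length_le_of_infix_feldmanPatternRep ha (by omega) hl h hjM hB hBb hBlen
      omega
    · have := hI.swap.mul_length_le_of_infix_feldmanPatternRep ha (by omega) hl h hkM hBb hB hBblen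
      rw [List.length_map] at this
      omega
  obtain ⟨I, hI, hImax⟩ := exists_isMatch_length_eq_maxMatch B Bb
  have hfbar : N * maxMatch B Bb < 2 * (B.length + Bb.length) := hImax ▸ hmatch I hI
  have hftilde : N * maxApproxMatch B Bb < 6 * (B.length + Bb.length) := by
    have := maxApproxMatch_le_three_mul_maxMatch B Bb
    nlinarith
  have h₁ := two_mul_div_lt_of_mul_lt (by omega) hfbar
  have h₂ := two_mul_div_lt_of_mul_lt (by omega) hftilde
  push_cast at h₁ h₂
  exact ⟨by rw [fbar]; linarith, lt_max_of_lt_right (by linarith)⟩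

/-- Let `a₁, …, a_N` be distinct symbols, `N ≥ 20`, `M ≥ 2`, `l ≥ 1`,
and let `B_j` be the Feldman patterns with each symbol repeated `l` times. If `B` and
`B̄` are consecutive substrings of `B_j` and `B_k` with `j ≠ k`, `1 ≤ j, k ≤ M`, of
lengths at least `l·N^{2M+2}`, then `f̄(B,B̄) > 1 − 4/√N` and `f̃(B,B̄) > 1 − 12/√N`. -/
theorem statement14 {σ : Type*} (N M l : ℕ) (hN : 20 ≤ N) (hM : 2 ≤ M) (hl : 1 ≤ l)
    (a : Fin N → σ) (ha : Function.Injective a)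
    (j k : ℕ) (hj1 : 1 ≤ j) (hjM : j ≤ M) (hk1 : 1 ≤ k) (hkM : k ≤ M) (hjk : j ≠ k)
    (B Bb : List σ) (hB : B <:+: feldmanPatternRep N a l j M)
    (hBb : Bb <:+: feldmanPatternRep N a l k M)
    (hBlen : l * N ^ (2 * M + 2) ≤ B.length) (hBblen : l * N ^ (2 * M + 2) ≤ Bb.length) :
    1 - 4 / Real.sqrt N < fbar B Bb ∧ 1 - 12 / Real.sqrt N < ftilde B Bb :=
  statement14_general N M l hN hl a ha j k hjM hkM hjk B Bb hB hBb hBlen hBblen
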